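/- Fix a noise system on Tame(Q≥0^r, Vect_K) and define d(F,G) = inf{ε : F and G are ε-close} (∞ if no such ε). Then d is an extended pseudometric on tame functors: d(F,F)=0, d is symmetric, and d satisfies the triangle inequality d(F,H) ≤ d(F,G)+d(G,H). -/

import Mathlib

open CategoryTheory CategoryTheory.Limits
open scoped NNReal ENNReal

set_option synthInstance.maxHeartbeats 1000000
set_option maxHeartbeats 1000000

attribute [local instance 2000] Preorder.smallCategory
attribute [local instance] CategoryTheory.Abelian.hasFiniteBiproducts

/-- The poset of `r`-tuples of non-negative rational numbers, with the componentwise order. -/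
abbrev Qr (r : ℕ) := Fin r → ℚ≥0

/-- The poset of `r`-tuples of natural numbers, with the componentwise order. -/
abbrev Nr (r : ℕ) := Fin r → ℕ

/-- `bfloor α v = join {w ∈ ℕ^r | α w ≤ v}`, computed componentwise as `⌊vᵢ/α⌋`. -/
def bfloor (α : ℚ≥0) {r : ℕ} (v : Qr r) : Nr r := fun i => Nat.floor ((v i : ℚ) / (α : ℚ))

/-- The embedding `α : ℕ^r → ℚ≥0^r`, `w ↦ α w`. -/
def embQ (α : ℚ≥0) {r : ℕ} (w : Nr r) : Qr r := fun i => α * (w i : ℚ≥0)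

theorem bfloor_mono (α : ℚ≥0) (r : ℕ) : Monotone (bfloor α (r := r)) := by
  intro v w h i
  exact Nat.floor_mono (by gcongr; exact_mod_cast h i)

theorem embQ_mono (α : ℚ≥0) (r : ℕ) : Monotone (embQ α (r := r)) := by
  intro v w h i
  dsimp [embQ]
  gcongr
  exact_mod_cast h i

/-- A functor `G : ℚ≥0^r ⥤ C` is `α`-tame if `G(α bα v ≤ v)` is an isomorphism for every `v`,
i.e. `G` is (isomorphic to) the left Kan extension along `α : ℕ^r → ℚ≥0^r` of its restriction;
equivalently, `G` is constant on the fundamental domains of `α`. -/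
def IsAlphaTame {C : Type*} [Category C] (α : ℚ≥0) {r : ℕ} (G : Qr r ⥤ C) : Prop :=
  ∀ (v : Qr r) (h : embQ α (bfloor α v) ≤ v), IsIso (G.map (homOfLE h))

/-- A functor is tame if it is `α`-tame for some positive rational `α`. -/
def IsTame {C : Type*} [Category C] {r : ℕ} (G : Qr r ⥤ C) : Prop :=
  ∃ α : ℚ≥0, 0 < α ∧ IsAlphaTame α G

/-- A noise system in `Tame(ℚ≥0^r, Vect_K)`. -/
structure NoiseSystem (K : Type) [Field K] (r : ℕ) where
  S : ℚ≥0 → Set (Qr r ⥤ ModuleCat K)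
  tame_mem : ∀ (ε : ℚ≥0) (F : Qr r ⥤ ModuleCat K), F ∈ S ε → IsTame F
  zero_mem : ∀ (ε : ℚ≥0) (F : Qr r ⥤ ModuleCat K), IsZero F → F ∈ S ε
  mono : ∀ τ ε : ℚ≥0, τ < ε → S τ ⊆ S ε
  ses_small : ∀ (F G H : Qr r ⥤ ModuleCat K) (f : F ⟶ G) (g : G ⟶ H) (w : f ≫ g = 0),
    (ShortComplex.mk f g w).ShortExact → IsTame F → IsTame H →
      ∀ ε : ℚ≥0, G ∈ S ε → F ∈ S ε ∧ H ∈ S ε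
  ses_add : ∀ (F G H : Qr r ⥤ ModuleCat K) (f : F ⟶ G) (g : G ⟶ H) (w : f ≫ g = 0),
    (ShortComplex.mk f g w).ShortExact → IsTame G →
      ∀ ε τ : ℚ≥0, F ∈ S ε → H ∈ S τ → G ∈ S (ε + τ)

/-- `φ` is an `ε`-equivalence: its kernel is `τ`-small and its cokernel is `μ`-small with
`τ + μ ≤ ε`. -/
noncomputable def IsEpsEquiv {K : Type} [Field K] {r : ℕ} (N : NoiseSystem K r) (ε : ℚ≥0)
    {F G : Qr r ⥤ ModuleCat K} (φ : F ⟶ G) : Prop :=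
  ∃ τ μ : ℚ≥0, τ + μ ≤ ε ∧ kernel φ ∈ N.S τ ∧ cokernel φ ∈ N.S μ

/-- `F` and `G` are `ε`-close: there is a common span `F ← H → G` by a `τ`- and a
`μ`-equivalence with `τ + μ ≤ ε`. -/
noncomputable def IsEpsClose {K : Type} [Field K] {r : ℕ} (N : NoiseSystem K r) (ε : ℚ≥0)
    (F G : Qr r ⥤ ModuleCat K) : Prop :=
  ∃ H : Qr r ⥤ ModuleCat K, IsTame H ∧
    ∃ (φ : H ⟶ F) (ψ : H ⟶ G) (τ μ : ℚ≥0),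
      τ + μ ≤ ε ∧ IsEpsEquiv N τ φ ∧ IsEpsEquiv N μ ψ

/-- The extended pseudometric associated with a noise system: the infimum of the `ε` such
that `F` and `G` are `ε`-close (`∞` if there is none). -/
noncomputable def noiseDist {K : Type} [Field K] {r : ℕ} (N : NoiseSystem K r)
    (F G : Qr r ⥤ ModuleCat K) : ℝ≥0∞ :=
  ⨅ (ε : ℚ≥0) (_ : IsEpsClose N ε F G), ((ε : ℝ≥0) : ℝ≥0∞)

/-!
Closeness is witnessed by spans `F ← H → G` of ε-equivalences. Reflexivity and symmetry are
immediate. For the triangle inequality two spans are composed by pulling back along the middle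
functor: ε-equivalences are stable under base change, and they compose additively because the
kernel (resp. cokernel) of a composite `f ≫ g` sits in an exact sequence between those of `f` and
`g`, while noise is additive along exact sequences. The noise axioms only apply to tame functors;
tameness of all auxiliary functors holds because finitely many tame functors are tame at a common
scale `1/k`, and at a fixed scale tameness is computed pointwise, so it passes to finite limits
and colimits.
-/

section FunctorLimits

variable {J C D : Type*} [Category J] [Category C] [Category D]

theorem isIso_limit_map [HasLimitsOfShape J D] (F : J ⥤ C ⥤ D) {v w : C} (f : v ⟶ w)
    (h : ∀ j, IsIso ((F.obj j).map f)) : IsIso ((limit F).map f) := by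
  have : ∀ j, IsIso ((Functor.whiskerLeft F ((evaluation C D).map f)).app j) := h
  have := NatIso.isIso_of_isIso_app (Functor.whiskerLeft F ((evaluation C D).map f))
  rw [(Iso.inv_comp_eq _).1 (limitObjIsoLimitCompEvaluation_inv_limit_map F f)]
  infer_instance

theorem isIso_colimit_map [HasColimitsOfShape J D] (F : J ⥤ C ⥤ D) {v w : C} (f : v ⟶ w)
    (h : ∀ j, IsIso ((F.obj j).map f)) : IsIso ((colimit F).map f) := by
  have : ∀ j, IsIso ((Functor.whiskerLeft F ((evaluation C D).map f)).app j) := h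
  have := NatIso.isIso_of_isIso_app (Functor.whiskerLeft F ((evaluation C D).map f))
  rw [(Iso.eq_comp_inv _).2 (colimit_map_colimitObjIsoColimitCompEvaluation_hom F f)]
  infer_instance

end FunctorLimits

section Tame

variable {r : ℕ} {α γ : ℚ≥0}

theorem gc_embQ_bfloor (hα : 0 < α) : GaloisConnection (embQ α (r := r)) (bfloor α) := by
  intro w v
  refine forall_congr' fun i => ?_
  rw [embQ, bfloor, Nat.le_floor_iff (by positivity), le_div_iff₀ (by exact_mod_cast hα),
    ← NNRat.coe_le_coe]
  push_cast
  rw [mul_comm]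

theorem bfloor_eq_of_embQ_bfloor_le (hα : 0 < α) {u v : Qr r}
    (h₁ : embQ α (bfloor α v) ≤ u) (h₂ : u ≤ v) : bfloor α u = bfloor α v :=
  le_antisymm (bfloor_mono α r h₂) ((gc_embQ_bfloor hα).le_iff_le.1 h₁)

theorem embQ_natCast_mul (n : ℕ) (w : Nr r) : embQ (n * γ) w = embQ γ (n • w) := by
  funext i
  simp only [embQ, Pi.smul_apply, smul_eq_mul, Nat.cast_mul]
  ring

variable {C : Type*} [Category C] {G : Qr r ⥤ C}

theorem IsAlphaTame.isIso_map_of_bfloor_eq (hα : 0 < α) (hG : IsAlphaTame α G) {u v : Qr r}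
    (huv : u ≤ v) (h : bfloor α u = bfloor α v) : IsIso (G.map (homOfLE huv)) := by
  have hv : embQ α (bfloor α v) ≤ v := (gc_embQ_bfloor hα).l_u_le v
  have hu : embQ α (bfloor α v) ≤ u := h ▸ (gc_embQ_bfloor hα).l_u_le u
  have hGu : IsIso (G.map (homOfLE hu)) := by
    have key : ∀ w (hw : embQ α w ≤ u), w = bfloor α u → IsIso (G.map (homOfLE hw)) := by
      rintro _ hw rfl
      exact hG u hw
    exact key _ hu h.symm
  have : IsIso (G.map (homOfLE hu) ≫ G.map (homOfLE huv)) := by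
    rw [← G.map_comp]
    exact hG v hv
  exact IsIso.of_isIso_comp_left (G.map (homOfLE hu)) _

theorem IsAlphaTame.of_natCast_mul (hγ : 0 < γ) {n : ℕ} (hn : 0 < n)
    (hG : IsAlphaTame (n * γ) G) : IsAlphaTame γ G := by
  have hα : 0 < (n : ℚ≥0) * γ := mul_pos (by exact_mod_cast hn) hγ
  intro v hv
  refine hG.isIso_map_of_bfloor_eq hα hv (bfloor_eq_of_embQ_bfloor_le hα ?_ hv)
  rw [embQ_natCast_mul]
  refine embQ_mono γ r ((gc_embQ_bfloor hγ).le_iff_le.1 ?_)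
  rw [← embQ_natCast_mul]
  exact (gc_embQ_bfloor hα).l_u_le v

theorem IsAlphaTame.inv_natCast (hα : 0 < α) (hG : IsAlphaTame α G) {k : ℕ} (hk : 0 < k)
    (hdvd : α.den ∣ k) : IsAlphaTame (k : ℚ≥0)⁻¹ G := by
  obtain ⟨m, rfl⟩ := hdvd
  have hm : 0 < m := Nat.pos_of_mul_pos_left hk
  refine IsAlphaTame.of_natCast_mul (by positivity) (Nat.mul_pos (NNRat.num_pos.2 hα) hm) ?_
  convert hG using 1
  nth_rw 3 [← NNRat.num_div_den α]
  push_cast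
  field_simp

theorem exists_isAlphaTame_of_isTame {ι : Type*} [Fintype ι] {G : ι → Qr r ⥤ C}
    (hG : ∀ i, IsTame (G i)) : ∃ γ : ℚ≥0, 0 < γ ∧ ∀ i, IsAlphaTame γ (G i) := by
  choose α hα hGα using hG
  have hk : 0 < ∏ i, (α i).den := Finset.prod_pos fun i _ => (α i).den_pos
  exact ⟨_, by positivity, fun i =>
    (hGα i).inv_natCast (hα i) hk (Finset.dvd_prod_of_mem _ (Finset.mem_univ i))⟩

theorem IsTame.limit {J : Type} [SmallCategory J] [FinCategory J] [HasLimitsOfShape J C]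
    (F : J ⥤ Qr r ⥤ C) (hF : ∀ j, IsTame (F.obj j)) : IsTame (limit F) := by
  obtain ⟨γ, hγ, hFγ⟩ := exists_isAlphaTame_of_isTame hF
  exact ⟨γ, hγ, fun v hv => isIso_limit_map F _ fun j => hFγ j v hv⟩

theorem IsTame.colimit {J : Type} [SmallCategory J] [FinCategory J] [HasColimitsOfShape J C]
    (F : J ⥤ Qr r ⥤ C) (hF : ∀ j, IsTame (F.obj j)) : IsTame (colimit F) := by
  obtain ⟨γ, hγ, hFγ⟩ := exists_isAlphaTame_of_isTame hF
  exact ⟨γ, hγ, fun v hv => isIso_colimit_map F _ fun j => hFγ j v hv⟩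

variable {X Y Z : Qr r ⥤ C}

theorem isTame_kernel [HasZeroMorphisms C] [HasFiniteLimits C] (f : X ⟶ Y) (hX : IsTame X)
    (hY : IsTame Y) : IsTame (kernel f) :=
  IsTame.limit _ (by rintro (_ | _) <;> assumption)

theorem isTame_cokernel [HasZeroMorphisms C] [HasFiniteColimits C] (f : X ⟶ Y) (hX : IsTame X)
    (hY : IsTame Y) : IsTame (cokernel f) :=
  IsTame.colimit _ (by rintro (_ | _) <;> assumption)

theorem isTame_pullback [HasFiniteLimits C] (f : X ⟶ Z) (g : Y ⟶ Z) (hX : IsTame X)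
    (hY : IsTame Y) (hZ : IsTame Z) : IsTame (pullback f g) :=
  IsTame.limit _ (by rintro (_ | _ | _) <;> assumption)

end Tame

namespace NoiseSystem

variable {K : Type} [Field K] {r : ℕ} (N : NoiseSystem K r) {X Y : Qr r ⥤ ModuleCat K}
  {a b ε : ℚ≥0}

theorem mem_of_mono (f : X ⟶ Y) [Mono f] (hX : IsTame X) (hY : Y ∈ N.S ε) : X ∈ N.S ε :=
  (N.ses_small _ _ _ f _ (cokernel.condition f)
    (ShortComplex.ShortExact.mk' (ShortComplex.exact_of_g_is_cokernel _ (cokernelIsCokernel f))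
      inferInstance inferInstance)
    hX (isTame_cokernel f hX (N.tame_mem ε Y hY)) ε hY).1

theorem mem_of_epi (f : X ⟶ Y) [Epi f] (hY : IsTame Y) (hX : X ∈ N.S ε) : Y ∈ N.S ε :=
  (N.ses_small _ _ _ _ f (kernel.condition f)
    (ShortComplex.ShortExact.mk' (ShortComplex.exact_of_f_is_kernel _ (kernelIsKernel f))
      inferInstance inferInstance)
    (isTame_kernel f (N.tame_mem ε X hX) hY) hY ε hX).2

theorem mem_add_of_exact {S : ShortComplex (Qr r ⥤ ModuleCat K)} (hS : S.Exact)
    (h₂ : IsTame S.X₂) (h₁ : S.X₁ ∈ N.S a) (h₃ : S.X₃ ∈ N.S b) : S.X₂ ∈ N.S (a + b) := by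
  -- `X₂` is an extension of `cokernel S.f`, a subobject of `X₃`,
  -- by `kernel S.g`, a quotient of `X₁`.
  let d := ShortComplex.HomologyData.ofAbelian S
  have := hS.epi_f' d.left
  have := hS.mono_g' d.right
  have hK : IsTame (kernel S.g) := isTame_kernel S.g h₂ (N.tame_mem b _ h₃)
  have hQ : IsTame (cokernel S.f) := isTame_cokernel S.f (N.tame_mem a _ h₁) h₂
  exact N.ses_add _ _ _ _ _ _ (hS.shortExact d) h₂ a b
    (N.mem_of_epi d.left.f' hK h₁) (N.mem_of_mono d.right.g' hQ h₃)

end NoiseSystem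

section EpsEquiv

variable {K : Type} [Field K] {r : ℕ} {N : NoiseSystem K r}
  {P X Y Z : Qr r ⥤ ModuleCat K}

variable (N) in
theorem isEpsEquiv_of_isIso (f : X ⟶ Y) [IsIso f] : IsEpsEquiv N 0 f :=
  ⟨0, 0, le_of_eq (add_zero 0), N.zero_mem _ _ (isZero_kernel_of_mono f),
    N.zero_mem _ _ (isZero_cokernel_of_epi f)⟩

theorem IsEpsEquiv.comp {a b : ℚ≥0} {f : X ⟶ Y} {g : Y ⟶ Z} (hX : IsTame X) (hZ : IsTame Z)
    (hf : IsEpsEquiv N a f) (hg : IsEpsEquiv N b g) : IsEpsEquiv N (a + b) (f ≫ g) := by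
  obtain ⟨a₁, a₂, ha, hf₁, hf₂⟩ := hf
  obtain ⟨b₁, b₂, hb, hg₁, hg₂⟩ := hg
  have hfg := kernelCokernelCompSequence_exact f g
  refine ⟨a₁ + b₁, a₂ + b₂, ?_, N.mem_add_of_exact (hfg.exact 0) (isTame_kernel _ hX hZ) hf₁ hg₁,
    N.mem_add_of_exact (hfg.exact 3) (isTame_cokernel _ hX hZ) hf₂ hg₂⟩
  calc a₁ + b₁ + (a₂ + b₂) = (a₁ + a₂) + (b₁ + b₂) := add_add_add_comm _ _ _ _
    _ ≤ a + b := add_le_add ha hb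

theorem IsEpsEquiv.of_isPullback {μ : ℚ≥0} {fst : P ⟶ X} {snd : P ⟶ Y} {f : X ⟶ Z}
    {g : Y ⟶ Z} (sq : IsPullback fst snd f g) (hP : IsTame P) (hX : IsTame X)
    (hg : IsEpsEquiv N μ g) : IsEpsEquiv N μ fst := by
  obtain ⟨μ₁, μ₂, hμ, hg₁, hg₂⟩ := hg
  have := isIso_kernel_map_of_isPullback sq
  have := Abelian.mono_cokernel_map_of_isPullback sq
  exact ⟨μ₁, μ₂, hμ, N.mem_of_mono (kernel.map fst g snd f sq.w) (isTame_kernel fst hP hX) hg₁,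
    N.mem_of_mono (cokernel.map fst g snd f sq.w) (isTame_cokernel fst hP hX) hg₂⟩

end EpsEquiv

section EpsClose

variable {K : Type} [Field K] {r : ℕ} {N : NoiseSystem K r} {F G H : Qr r ⥤ ModuleCat K}
  {ε δ : ℚ≥0}

variable (N) in
theorem isEpsClose_refl (hF : IsTame F) : IsEpsClose N 0 F F :=
  ⟨F, hF, 𝟙 F, 𝟙 F, 0, 0, le_of_eq (add_zero 0), isEpsEquiv_of_isIso N _,
    isEpsEquiv_of_isIso N _⟩

theorem IsEpsClose.symm (h : IsEpsClose N ε F G) : IsEpsClose N ε G F := by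
  obtain ⟨A, hA, φ, ψ, τ, μ, hτμ, hφ, hψ⟩ := h
  exact ⟨A, hA, ψ, φ, μ, τ, add_comm μ τ ▸ hτμ, hψ, hφ⟩

theorem IsEpsClose.trans (hF : IsTame F) (hG : IsTame G) (hH : IsTame H)
    (h₁ : IsEpsClose N ε F G) (h₂ : IsEpsClose N δ G H) : IsEpsClose N (ε + δ) F H := by
  obtain ⟨A, hA, φ, ψ, τ, μ, hτμ, hφ, hψ⟩ := h₁
  obtain ⟨B, hB, φ', ψ', τ', μ', hτμ', hφ', hψ'⟩ := h₂
  have sq := IsPullback.of_hasPullback ψ φ'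
  have hP := isTame_pullback ψ φ' hA hB hG
  refine ⟨pullback ψ φ', hP, _, _, τ' + τ, μ + μ', ?_,
    (hφ'.of_isPullback sq hP hA).comp hP hF hφ, (hψ.of_isPullback sq.flip hP hB).comp hP hH hψ'⟩
  calc τ' + τ + (μ + μ') = (τ + μ) + (τ' + μ') := by ring
    _ ≤ ε + δ := add_le_add hτμ hτμ'

end EpsClose

section Dist

variable {K : Type} [Field K] {r : ℕ} {N : NoiseSystem K r} {F G H : Qr r ⥤ ModuleCat K}

theorem IsEpsClose.noiseDist_le {ε : ℚ≥0} (h : IsEpsClose N ε F G) :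
    noiseDist N F G ≤ (ε : ℝ≥0) :=
  iInf₂_le ε h

theorem noiseDist_self (hF : IsTame F) : noiseDist N F F = 0 :=
  nonpos_iff_eq_zero.1 ((isEpsClose_refl N hF).noiseDist_le.trans_eq (by simp))

theorem noiseDist_comm (N : NoiseSystem K r) (F G : Qr r ⥤ ModuleCat K) :
    noiseDist N F G = noiseDist N G F :=
  le_antisymm (le_iInf₂ fun _ h => h.symm.noiseDist_le) (le_iInf₂ fun _ h => h.symm.noiseDist_le)

theorem noiseDist_triangle (hF : IsTame F) (hG : IsTame G) (hH : IsTame H) :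
    noiseDist N F H ≤ noiseDist N F G + noiseDist N G H := by
  simp only [noiseDist, ENNReal.iInf_add, ENNReal.add_iInf]
  refine le_iInf₂ fun δ h₂ => le_iInf₂ fun ε h₁ => ?_
  exact (h₁.trans hF hG hH h₂).noiseDist_le.trans_eq (by push_cast; rfl)

end Dist

/-- `noiseDist` is an extended pseudometric on tame functors: reflexive, symmetric and
satisfying the triangle inequality. -/
theorem noiseDist_pseudometric {K : Type} [Field K] {r : ℕ} (N : NoiseSystem K r)
    (F G H : Qr r ⥤ ModuleCat K) (hF : IsTame F) (hG : IsTame G) (hH : IsTame H) :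
    noiseDist N F F = 0 ∧
    noiseDist N F G = noiseDist N G F ∧
    noiseDist N F H ≤ noiseDist N F G + noiseDist N G H :=
  ⟨noiseDist_self hF, noiseDist_comm N F G, noiseDist_triangle hF hG hH⟩
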